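/- In the disperser-based partial assignment chain $\widehat{\mathcal{E}_i} = \mathcal{E}_{i,1} \circ \cdots \circ \mathcal{E}_{i,D}$, suppose some round $j$ satisfies: every bin $b$ in a set $B$ of at least $M/2$ bins has at least one worker of $W$ and at least one task of $T$ hashed to it in round $j$. Then, with $c_a$ active bins (bins of $B$ containing an unmatched worker and unmatched task at round $j$), $c_w$ bins of $B$ whose workers were all matched earlier, and $c_t$ bins of $B$ whose tasks were all matched earlier, the total number of worker/task matches made by $\mathcal{E}_{i,1} \circ \cdots \circ \mathcal{E}_{i,j}$ on input $(W, T)$ is at least $c_a + \max(c_w, c_t) \ge c_a + (c_w + c_t)/2 \ge M/4$. -/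
import Mathlib


open Finset

/-- One round of bin hashing: in each of the `M` bins, if at least one (unmatched) worker
and one (unmatched) task hash there, the smallest such worker is matched to the smallest
such task. -/
def binMatch {nw nt M : ℕ} (h₁ : Fin nw → Fin M) (h₂ : Fin nt → Fin M)
    (W : Finset (Fin nw)) (T : Finset (Fin nt)) : Finset (Fin nw × Fin nt) :=
  Finset.univ.biUnion fun b : Fin M =>
    if hW : (W.filter fun ω => h₁ ω = b).Nonempty then
      if hT : (T.filter fun τ => h₂ τ = b).Nonempty then
        {((W.filter fun ω => h₁ ω = b).min' hW, (T.filter fun τ => h₂ τ = b).min' hT)}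
      else ∅
    else ∅

/-- The set of all worker/task matches made by rounds `0, 1, …, j-1` of the chain
`𝓔_{i,1} ∘ ⋯ ∘ 𝓔_{i,j}`: round `r` hashes the still-unmatched workers and tasks with the
round-`r` hash functions `h₁ r`, `h₂ r` and matches greedily within each bin. -/
def runRounds {nw nt M : ℕ} (h₁ : ℕ → Fin nw → Fin M) (h₂ : ℕ → Fin nt → Fin M)
    (W : Finset (Fin nw)) (T : Finset (Fin nt)) : ℕ → Finset (Fin nw × Fin nt)
  | 0 => ∅
  | j + 1 =>
      let prev := runRounds h₁ h₂ W T j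
      prev ∪ binMatch (h₁ j) (h₂ j)
        (W \ prev.image Prod.fst) (T \ prev.image Prod.snd)


lemma binMatch_fst_mem {nw nt M : ℕ} {h₁ : Fin nw → Fin M} {h₂ : Fin nt → Fin M}
    {W : Finset (Fin nw)} {T : Finset (Fin nt)} {p : Fin nw × Fin nt}
    (hp : p ∈ binMatch h₁ h₂ W T) : p.1 ∈ W := by
  simp only [binMatch, Finset.mem_biUnion, Finset.mem_univ, true_and] at hp
  obtain ⟨b, hb⟩ := hp
  split_ifs at hb with hW hT
  · simp only [Finset.mem_singleton] at hb
    have := Finset.min'_mem _ hW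
    rw [hb]
    exact (Finset.mem_filter.mp this).1
  all_goals simp at hb

/-- suppose at round `j` there is a set `B` of at least `M/2` bins such that
every bin of `B` receives at least one worker of `W` and at least one task of `T` under the
round-`j` hash functions.  Let `c_a` be the number of bins of `B` that are active at round
`j` (contain an unmatched worker and an unmatched task), `c_w` the number of bins of `B`
whose workers were all matched in earlier rounds, and `c_t` the number of bins of `B` whose
tasks were all matched in earlier rounds.  Then the total number of matches made by rounds
`0, …, j` is at least `c_a + max(c_w, c_t) ≥ c_a + (c_w + c_t)/2 ≥ M/4`. -/
theorem rounds_make_many_matches {nw nt M : ℕ}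
    (h₁ : ℕ → Fin nw → Fin M) (h₂ : ℕ → Fin nt → Fin M)
    (W : Finset (Fin nw)) (T : Finset (Fin nt)) (j : ℕ)
    (B : Finset (Fin M)) (hB : M ≤ 2 * B.card)
    (hbins : ∀ b ∈ B, (∃ ω ∈ W, h₁ j ω = b) ∧ (∃ τ ∈ T, h₂ j τ = b)) :
    let prev := runRounds h₁ h₂ W T j
    let Wj := W \ prev.image Prod.fst
    let Tj := T \ prev.image Prod.snd
    let ca := (B.filter fun b => (∃ ω ∈ Wj, h₁ j ω = b) ∧ (∃ τ ∈ Tj, h₂ j τ = b)).card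
    let cw := (B.filter fun b => ¬ ∃ ω ∈ Wj, h₁ j ω = b).card
    let ct := (B.filter fun b => ¬ ∃ τ ∈ Tj, h₂ j τ = b).card
    ca + max cw ct ≤ (runRounds h₁ h₂ W T (j + 1)).card ∧
      2 * (ca + max cw ct) ≥ 2 * ca + (cw + ct) ∧
      M ≤ 4 * (ca + max cw ct) ∧
      M ≤ 4 * (runRounds h₁ h₂ W T (j + 1)).card := by
  intro prev Wj Tj ca cw ct
  have hrun : runRounds h₁ h₂ W T (j+1) = prev ∪ binMatch (h₁ j) (h₂ j) Wj Tj := rfl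
  set BM := binMatch (h₁ j) (h₂ j) Wj Tj with hBMdef
  have hdisj : Disjoint prev BM := by
    rw [Finset.disjoint_right]
    intro p hp hpprev
    have h1 : p.1 ∈ Wj := binMatch_fst_mem hp
    have h2 : p.1 ∈ prev.image Prod.fst := Finset.mem_image_of_mem _ hpprev
    exact (Finset.mem_sdiff.mp h1).2 h2
  have hcard : (runRounds h₁ h₂ W T (j+1)).card = prev.card + BM.card := by
    rw [hrun, Finset.card_union_of_disjoint hdisj]
  have hca : ca ≤ BM.card := by
    have hsub : (B.filter fun b => (∃ ω ∈ Wj, h₁ j ω = b) ∧ (∃ τ ∈ Tj, h₂ j τ = b))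
        ⊆ BM.image (fun p => h₁ j p.1) := by
      intro b hb
      rw [Finset.mem_filter] at hb
      obtain ⟨_, ⟨ω, hω, hωb⟩, ⟨τ, hτ, hτb⟩⟩ := hb
      have hW : (Wj.filter fun ω => h₁ j ω = b).Nonempty :=
        ⟨ω, Finset.mem_filter.mpr ⟨hω, hωb⟩⟩
      have hT : (Tj.filter fun τ => h₂ j τ = b).Nonempty :=
        ⟨τ, Finset.mem_filter.mpr ⟨hτ, hτb⟩⟩
      refine Finset.mem_image.mpr ⟨((Wj.filter fun ω => h₁ j ω = b).min' hW,
        (Tj.filter fun τ => h₂ j τ = b).min' hT), ?_, ?_⟩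
      · simp only [hBMdef, binMatch, Finset.mem_biUnion, Finset.mem_univ, true_and]
        exact ⟨b, by rw [dif_pos hW, dif_pos hT]; simp⟩
      · exact (Finset.mem_filter.mp (Finset.min'_mem _ hW)).2
    calc ca ≤ (BM.image (fun p => h₁ j p.1)).card := Finset.card_le_card hsub
      _ ≤ BM.card := Finset.card_image_le
  have hcw : cw ≤ prev.card := by
    have hsub : (B.filter fun b => ¬ ∃ ω ∈ Wj, h₁ j ω = b)
        ⊆ (prev.image Prod.fst).image (h₁ j) := by
      intro b hb
      rw [Finset.mem_filter] at hb
      obtain ⟨hbB, hno⟩ := hb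
      obtain ⟨⟨ω, hωW, hωb⟩, -⟩ := hbins b hbB
      have hn : ω ∉ Wj := fun h => hno ⟨ω, h, hωb⟩
      have hωm : ω ∈ prev.image Prod.fst := by
        by_contra h
        exact hn (Finset.mem_sdiff.mpr ⟨hωW, h⟩)
      exact Finset.mem_image.mpr ⟨ω, hωm, hωb⟩
    calc cw ≤ _ := Finset.card_le_card hsub
      _ ≤ (prev.image Prod.fst).card := Finset.card_image_le
      _ ≤ prev.card := Finset.card_image_le
  have hct : ct ≤ prev.card := by
    have hsub : (B.filter fun b => ¬ ∃ τ ∈ Tj, h₂ j τ = b)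
        ⊆ (prev.image Prod.snd).image (h₂ j) := by
      intro b hb
      rw [Finset.mem_filter] at hb
      obtain ⟨hbB, hno⟩ := hb
      obtain ⟨-, ⟨τ, hτT, hτb⟩⟩ := hbins b hbB
      have hn : τ ∉ Tj := fun h => hno ⟨τ, h, hτb⟩
      have hτm : τ ∈ prev.image Prod.snd := by
        by_contra h
        exact hn (Finset.mem_sdiff.mpr ⟨hτT, h⟩)
      exact Finset.mem_image.mpr ⟨τ, hτm, hτb⟩
    calc ct ≤ _ := Finset.card_le_card hsub
      _ ≤ (prev.image Prod.snd).card := Finset.card_image_le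
      _ ≤ prev.card := Finset.card_image_le
  have hBsub : B ⊆ (B.filter fun b => (∃ ω ∈ Wj, h₁ j ω = b) ∧ (∃ τ ∈ Tj, h₂ j τ = b))
      ∪ ((B.filter fun b => ¬ ∃ ω ∈ Wj, h₁ j ω = b)
        ∪ (B.filter fun b => ¬ ∃ τ ∈ Tj, h₂ j τ = b)) := by
    intro b hb
    simp only [Finset.mem_union, Finset.mem_filter]
    by_cases hw : ∃ ω ∈ Wj, h₁ j ω = b
    · by_cases ht : ∃ τ ∈ Tj, h₂ j τ = b
      · exact Or.inl ⟨hb, hw, ht⟩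
      · exact Or.inr (Or.inr ⟨hb, ht⟩)
    · exact Or.inr (Or.inl ⟨hb, hw⟩)
  have hBsum : B.card ≤ ca + (cw + ct) :=
    (Finset.card_le_card hBsub).trans ((Finset.card_union_le _ _).trans
      (Nat.add_le_add_left (Finset.card_union_le _ _) _))
  have hml : cw ≤ max cw ct := le_max_left _ _
  have hmr : ct ≤ max cw ct := le_max_right _ _
  have hmax : max cw ct ≤ prev.card := max_le hcw hct
  set m := max cw ct with hm
  refine ⟨by omega, by omega, by omega, by omega⟩
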